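/- Fix L > 0 and α, β ∈ (0, L) with α + β ≤ L, and suppose F_l(α) = true, F_r(α) = true and F_r(β) = false. Consider the multiset consisting of m ≥ 1 copies of I1 = [0, L), one copy of I2 = [α − L, α) and one copy of I3 = [L − β, 2L − β). Then opt of this multiset is 2, and for every ordering of the multiset such that (a) the first element is a copy of I1, (b) at least one copy of I1 occurs between I2 and I3, and (c) at least one copy of I1 occurs after both I2 and I3, the memoryless algorithm A_{F_l,F_r} ends with final solution exactly {[0, L)}, of cardinality 1. (This is the deterministic core of the lemma that if F_r(γ) = true for some γ > L/2, the adversary forces competitive ratio 2 under random-order arrivals.) -/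

import Mathlib

/-!
`I1` and `I2` conflict, so a feasible subset of `{I1, I2, I3}` misses one of them and has
at most two elements, while `I2` ends where `I3` at the earliest begins: `{I2, I3}` is
feasible.

Starting from `{I1}`, a copy of `I1` changes nothing, and neither does `I3`, a right
overlap of length `β` that is rejected. `I2` is a left overlap of length `α` and replaces
`I1`, but the next copy of `I1` overlaps it on the right by `α` and takes its place back.
As every other arrival is a copy of `I1`, the ordering conditions force `I2` to be followed
at once by a copy of `I1`; so `I3` never meets `{I2}`, and the run ends in `{I1}`.
-/

open scoped Classical

/-- An interval: a pair `(s, f)` of reals with `s < f`, identified with `[s, f) ⊆ ℝ`. -/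
structure Ivl where
  s : ℝ
  f : ℝ
  lt : s < f

namespace Ivl

noncomputable instance : DecidableEq Ivl := fun a b =>
  decidable_of_iff (a.s = b.s ∧ a.f = b.f) (by cases a; cases b; simp)

/-- The set of points covered by an interval. -/
def toSet (I : Ivl) : Set ℝ := Set.Ico I.s I.f

/-- The length of an interval. -/
def length (I : Ivl) : ℝ := I.f - I.s

/-- Two intervals conflict if their point sets intersect. -/
def Conflict (I J : Ivl) : Prop := (I.toSet ∩ J.toSet).Nonempty

/-- A finite set of intervals is feasible (pairwise disjoint) if no two distinct members
conflict. -/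
def Feasible (S : Finset Ivl) : Prop :=
  ∀ I ∈ S, ∀ J ∈ S, I ≠ J → ¬ Conflict I J

end Ivl

/-- `optM M` is the maximum cardinality of a pairwise-disjoint finite set of intervals all of
which occur in the multiset `M`. -/
noncomputable def optM (M : Multiset Ivl) : ℕ :=
  (M.toFinset.powerset.filter (fun T => Ivl.Feasible T)).sup Finset.card

/-- One step of the deterministic memoryless algorithm `A_{F_l, F_r}` on single-length
instances: on arrival of `I`, let `C` be the set of currently scheduled intervals conflicting
with `I`.  If `C = ∅`, take `I`.  If `C = {J}` and `I` overlaps `J` on the left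
(`I.s < J.s`, overlap `I.f - J.s`), replace `J` by `I` iff `F_l` of the overlap is `true`;
if `I` overlaps `J` on the right (`J.s < I.s`, overlap `J.f - I.s`), replace iff `F_r` of
the overlap is `true`.  In all other cases (identical interval, or two or more conflicts)
leave the solution unchanged. -/
noncomputable def memStep (Fl Fr : ℝ → Bool) (S : Finset Ivl) (I : Ivl) : Finset Ivl :=
  let C := S.filter (fun J => Ivl.Conflict J I)
  if C = ∅ then insert I S
  else if hC : ∃ J : Ivl, C = {J} then
    let J := hC.choose
    if I.s < J.s then (if Fl (I.f - J.s) then insert I (S.erase J) else S)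
    else if J.s < I.s then (if Fr (J.f - I.s) then insert I (S.erase J) else S)
    else S
  else S

/-- The memoryless algorithm `A_{F_l, F_r}` run on a list of arrivals. -/
noncomputable def memRun (Fl Fr : ℝ → Bool) (σ : List Ivl) : Finset Ivl :=
  σ.foldl (memStep Fl Fr) ∅

namespace Ivl

theorem conflict_iff {I J : Ivl} : Conflict I J ↔ J.s < I.f ∧ I.s < J.f := by
  simp [Conflict, toSet, Set.Ico_inter_Ico, Set.nonempty_Ico, I.lt, J.lt]

theorem conflict_comm {I J : Ivl} : Conflict I J ↔ Conflict J I := by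
  rw [conflict_iff, conflict_iff, and_comm]

theorem conflict_refl (I : Ivl) : Conflict I I :=
  conflict_iff.2 ⟨I.lt, I.lt⟩

theorem feasible_pair {I J : Ivl} (h : ¬ Conflict I J) : Feasible {I, J} := by
  simp only [Feasible, Finset.mem_insert, Finset.mem_singleton]
  rintro K (rfl | rfl) K' (rfl | rfl) hne
  · exact (hne rfl).elim
  · exact h
  · rwa [conflict_comm]
  · exact (hne rfl).elim

/-- Two distinct conflicting intervals cannot both be in a feasible set. -/
theorem Feasible.card_le_two {I J K : Ivl} {T : Finset Ivl} (hT : T ⊆ {I, J, K})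
    (hfeas : Feasible T) (hne : I ≠ J) (hIJ : Conflict I J) : T.card ≤ 2 := by
  have hlt : T ⊂ {I, J, K} := by
    refine hT.ssubset_of_ne ?_
    rintro rfl
    exact hfeas I (by simp) J (by simp) hne hIJ
  have := Finset.card_lt_card hlt
  have := Finset.card_le_three (a := I) (b := J) (c := K)
  omega

end Ivl

theorem card_le_optM {M : Multiset Ivl} {T : Finset Ivl} (hT : T ⊆ M.toFinset)
    (hfeas : Ivl.Feasible T) : T.card ≤ optM M :=
  Finset.le_sup (Finset.mem_filter.2 ⟨Finset.mem_powerset.2 hT, hfeas⟩)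

theorem optM_le {M : Multiset Ivl} {n : ℕ}
    (h : ∀ T ⊆ M.toFinset, Ivl.Feasible T → T.card ≤ n) : optM M ≤ n :=
  Finset.sup_le fun T hT => by
    rw [Finset.mem_filter, Finset.mem_powerset] at hT
    exact h T hT.1 hT.2

theorem optM_replicate_add_pair {I J K : Ivl} (m : ℕ) (hne : I ≠ J) (hIJ : Ivl.Conflict I J)
    (hJK : ¬ Ivl.Conflict J K) : optM (.replicate m I + {J, K}) = 2 := by
  have hmem : ∀ w, w ∈ (Multiset.replicate m I + {J, K}).toFinset ↔
      (m ≠ 0 ∧ w = I) ∨ w = J ∨ w = K := fun w => by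
    simp only [Multiset.mem_toFinset, Multiset.mem_add, Multiset.mem_replicate,
      Multiset.insert_eq_cons, Multiset.mem_cons, Multiset.mem_singleton]
  refine le_antisymm ?_ ?_
  · refine optM_le fun T hT hfeas => hfeas.card_le_two (K := K) (fun w hw => ?_) hne hIJ
    simp only [Finset.mem_insert, Finset.mem_singleton]
    have := (hmem w).1 (hT hw)
    tauto
  · have hJK' : J ≠ K := fun h => hJK (h ▸ Ivl.conflict_refl J)
    rw [← Finset.card_pair hJK']
    refine card_le_optM (fun w hw => ?_) (Ivl.feasible_pair hJK)
    simp only [Finset.mem_insert, Finset.mem_singleton] at hw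
    exact (hmem w).2 (Or.inr hw)

section memStep

variable (Fl Fr : ℝ → Bool)

theorem memStep_empty (I : Ivl) : memStep Fl Fr ∅ I = {I} := by
  simp [memStep]

theorem memStep_singleton {K I : Ivl} (h : Ivl.Conflict K I) :
    memStep Fl Fr {K} I =
      if I.s < K.s then (if Fl (I.f - K.s) then {I} else {K})
      else if K.s < I.s then (if Fr (K.f - I.s) then {I} else {K})
      else {K} := by
  have hC : ({K} : Finset Ivl).filter (fun J => Ivl.Conflict J I) = {K} := by
    simp [Finset.filter_singleton, h]
  have hK : ∃ J : Ivl, ({K} : Finset Ivl) = {J} := ⟨K, rfl⟩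
  have hchoose : hK.choose = K := Finset.singleton_injective hK.choose_spec.symm
  simp only [memStep, hC, Finset.singleton_ne_empty, if_false, dif_pos hK, hchoose,
    Finset.erase_singleton, insert_empty_eq]

theorem memStep_singleton_self (I : Ivl) : memStep Fl Fr {I} I = {I} := by
  simp [memStep_singleton Fl Fr (Ivl.conflict_refl I)]

theorem memStep_singleton_of_left {K I : Ivl} (h : Ivl.Conflict K I) (hs : I.s < K.s) :
    memStep Fl Fr {K} I = if Fl (I.f - K.s) then {I} else {K} := by
  rw [memStep_singleton Fl Fr h, if_pos hs]

theorem memStep_singleton_of_right {K I : Ivl} (h : Ivl.Conflict K I) (hs : K.s < I.s) :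
    memStep Fl Fr {K} I = if Fr (K.f - I.s) then {I} else {K} := by
  rw [memStep_singleton Fl Fr h, if_neg hs.not_gt, if_pos hs]

end memStep

theorem List.foldl_eq_of_forall_mem {α β : Type*} {f : β → α → β} {b : β} {l : List α}
    (h : ∀ x ∈ l, f b x = b) : l.foldl f b = b := by
  induction l with
  | nil => rfl
  | cons x t ih =>
    rw [List.foldl_cons, h x List.mem_cons_self]
    exact ih fun y hy => h y (List.mem_cons_of_mem x hy)

theorem List.forall_eq_of_coe_eq_replicate_add_pair {α : Type*} {x y z : α}
    {l₁ l₂ l₃ : List α} {m : ℕ}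
    (h : ((l₁ ++ y :: (l₂ ++ z :: l₃) : List α) : Multiset α) = .replicate m x + {y, z}) :
    ∀ w ∈ l₁ ++ l₂ ++ l₃, w = x := by
  have hperm : ((l₁ ++ y :: (l₂ ++ z :: l₃) : List α) : Multiset α)
      = ((l₁ ++ l₂ ++ l₃ : List α) : Multiset α) + {y, z} := by
    simp only [← Multiset.coe_add, ← Multiset.cons_coe, Multiset.insert_eq_cons,
      ← Multiset.singleton_add]
    abel
  rw [hperm, add_left_inj] at h
  intro w hw
  exact Multiset.eq_of_mem_replicate (h ▸ (Multiset.mem_coe.2 hw))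

theorem List.exists_eq_cons_append_cons_cons {α : Type*} {x y z : α} {σ : List α} {m : ℕ}
    (hxy : x ≠ y) (hxz : x ≠ z) (hσ : (σ : Multiset α) = .replicate m x + {y, z})
    (hhead : σ.head? = some x)
    (hsplit : ∃ l₁ l₂ l₃ : List α, x ∈ l₂ ∧ x ∈ l₃ ∧
      (σ = l₁ ++ y :: (l₂ ++ z :: l₃) ∨ σ = l₁ ++ z :: (l₂ ++ y :: l₃))) :
    ∃ a b : List α, σ = x :: (a ++ y :: x :: b) ∧ ∀ w ∈ a ++ b, w = x ∨ w = z := by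
  obtain ⟨t, rfl⟩ := List.head?_eq_some_iff.1 hhead
  obtain ⟨l₁, l₂, l₃, hx₂, hx₃, hσ' | hσ'⟩ := hsplit
  · have hx := List.forall_eq_of_coe_eq_replicate_add_pair (hσ' ▸ hσ)
    rcases l₁ with _ | ⟨c, a⟩
    · exact absurd (List.cons.inj hσ').1 hxy
    rcases l₂ with _ | ⟨d, u⟩
    · simp at hx₂
    obtain ⟨rfl, rfl⟩ := List.cons.inj hσ'
    obtain rfl : d = x := hx d (by simp)
    refine ⟨a, u ++ z :: l₃, by simp, fun w hw => ?_⟩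
    simp only [List.mem_append, List.mem_cons] at hw hx
    grind
  · rw [Multiset.pair_comm] at hσ
    have hx := List.forall_eq_of_coe_eq_replicate_add_pair (hσ' ▸ hσ)
    rcases l₁ with _ | ⟨c, a⟩
    · exact absurd (List.cons.inj hσ').1 hxz
    rcases l₃ with _ | ⟨d, u⟩
    · simp at hx₃
    obtain ⟨rfl, rfl⟩ := List.cons.inj hσ'
    obtain rfl : d = x := hx d (by simp)
    refine ⟨a ++ z :: l₂, u, by simp, fun w hw => ?_⟩
    simp only [List.mem_append, List.mem_cons] at hw hx
    grind

section memRun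

variable {Fl Fr : ℝ → Bool} {I₁ I₂ I₃ : Ivl}

theorem memRun_cons_append_cons_cons (h₁₂ : memStep Fl Fr {I₁} I₂ = {I₂})
    (h₂₁ : memStep Fl Fr {I₂} I₁ = {I₁}) (h₁₃ : memStep Fl Fr {I₁} I₃ = {I₁})
    {a b : List Ivl} (hab : ∀ w ∈ a ++ b, w = I₁ ∨ w = I₃) :
    memRun Fl Fr (I₁ :: (a ++ I₂ :: I₁ :: b)) = {I₁} := by
  have hfix : ∀ w ∈ a ++ b, memStep Fl Fr {I₁} w = {I₁} := by
    rintro w hw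
    rcases hab w hw with rfl | rfl
    exacts [memStep_singleton_self Fl Fr w, h₁₃]
  have ha : a.foldl (memStep Fl Fr) {I₁} = {I₁} :=
    List.foldl_eq_of_forall_mem fun w hw => hfix w (List.mem_append_left b hw)
  have hb : b.foldl (memStep Fl Fr) {I₁} = {I₁} :=
    List.foldl_eq_of_forall_mem fun w hw => hfix w (List.mem_append_right a hw)
  simp only [memRun, List.foldl_cons, List.foldl_append, memStep_empty, ha, h₁₂, h₂₁, hb]

end memRun

theorem memoryless_replace_right_bad_instance_general (Fl Fr : ℝ → Bool) (L α β : ℝ)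
    (hα : α ∈ Set.Ioo 0 L) (hβ : β ∈ Set.Ioo 0 L) (hαβ : α + β ≤ L)
    (hFl : Fl α = true) (hFrα : Fr α = true) (hFrβ : Fr β = false)
    (m : ℕ)
    (I1 I2 I3 : Ivl) (hI1 : I1.s = 0 ∧ I1.f = L) (hI2 : I2.s = α - L ∧ I2.f = α)
    (hI3 : I3.s = L - β ∧ I3.f = 2 * L - β) :
    optM (Multiset.replicate m I1 + {I2, I3}) = 2 ∧
      ∀ σ : List Ivl, (σ : Multiset Ivl) = Multiset.replicate m I1 + {I2, I3} →
        σ.head? = some I1 →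
        (∃ l₁ l₂ l₃ : List Ivl, I1 ∈ l₂ ∧ I1 ∈ l₃ ∧
          (σ = l₁ ++ I2 :: (l₂ ++ I3 :: l₃) ∨ σ = l₁ ++ I3 :: (l₂ ++ I2 :: l₃))) →
        memRun Fl Fr σ = {I1} := by
  obtain ⟨hα₀, hαL⟩ := hα
  obtain ⟨hβ₀, hβL⟩ := hβ
  obtain ⟨hs₁, hf₁⟩ := hI1
  obtain ⟨hs₂, hf₂⟩ := hI2
  obtain ⟨hs₃, hf₃⟩ := hI3
  have c₁₂ : Ivl.Conflict I1 I2 := Ivl.conflict_iff.2 ⟨by linarith, by linarith⟩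
  have c₁₃ : Ivl.Conflict I1 I3 := Ivl.conflict_iff.2 ⟨by linarith, by linarith⟩
  have ne₁₂ : I1 ≠ I2 := fun h => by linarith [congrArg Ivl.s h]
  have ne₁₃ : I1 ≠ I3 := fun h => by linarith [congrArg Ivl.s h]
  refine ⟨optM_replicate_add_pair m ne₁₂ c₁₂ fun h => ?_, fun σ hσ hhead hsplit => ?_⟩
  · linarith [(Ivl.conflict_iff.1 h).1]
  obtain ⟨a, b, rfl, hab⟩ := List.exists_eq_cons_append_cons_cons ne₁₂ ne₁₃ hσ hhead hsplit
  refine memRun_cons_append_cons_cons ?_ ?_ ?_ hab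
  · rw [memStep_singleton_of_left Fl Fr c₁₂ (by linarith), show I2.f - I1.s = α by linarith,
      hFl, if_pos rfl]
  · rw [memStep_singleton_of_right Fl Fr (Ivl.conflict_comm.1 c₁₂) (by linarith),
      show I2.f - I1.s = α by linarith, hFrα, if_pos rfl]
  · rw [memStep_singleton_of_right Fl Fr c₁₃ (by linarith),
      show I1.f - I3.s = β by linarith, hFrβ, if_neg Bool.false_ne_true]

/-- Deterministic core of the random-order lower bound when `F_l α = true`, `F_r α = true`
and `F_r β = false`: for the multiset of `m` copies of `I1 = [0, L)` plus
`I2 = [α - L, α)` and `I3 = [L - β, 2L - β)` (with `α, β ∈ (0, L)`, `α + β ≤ L`), the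
optimum is `2`, while on every arrival order that starts with a copy of `I1`, has a copy of
`I1` between `I2` and `I3`, and has a copy of `I1` after both, the memoryless algorithm
`A_{F_l, F_r}` ends with the single interval `I1`. -/
theorem memoryless_replace_right_bad_instance (Fl Fr : ℝ → Bool) (L α β : ℝ) (hL : 0 < L)
    (hα : α ∈ Set.Ioo 0 L) (hβ : β ∈ Set.Ioo 0 L) (hαβ : α + β ≤ L)
    (hFl : Fl α = true) (hFrα : Fr α = true) (hFrβ : Fr β = false)
    (m : ℕ) (hm : 1 ≤ m)
    (I1 I2 I3 : Ivl) (hI1 : I1.s = 0 ∧ I1.f = L) (hI2 : I2.s = α - L ∧ I2.f = α)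
    (hI3 : I3.s = L - β ∧ I3.f = 2 * L - β) :
    optM (Multiset.replicate m I1 + {I2, I3}) = 2 ∧
      ∀ σ : List Ivl, (σ : Multiset Ivl) = Multiset.replicate m I1 + {I2, I3} →
        σ.head? = some I1 →
        (∃ l₁ l₂ l₃ : List Ivl, I1 ∈ l₂ ∧ I1 ∈ l₃ ∧
          (σ = l₁ ++ I2 :: (l₂ ++ I3 :: l₃) ∨ σ = l₁ ++ I3 :: (l₂ ++ I2 :: l₃))) →
        memRun Fl Fr σ = {I1} :=
  memoryless_replace_right_bad_instance_general Fl Fr L α β hα hβ hαβ hFl hFrα hFrβ m I1 I2 I3 hI1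
    hI2 hI3
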